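/- arXiv:math/0604596 — 3 statements merged into one kernel-verified Lean document; each statement's English description precedes it below -/
import Mathlib

section
/- Let G be a free abelian group of finite rank with a bilinear pairing into the integers, and let e₁,…,e_r ∈ G be elements with e₁+⋯+e_r = 0. Suppose there is a symmetric relation R on {1,…,r} whose graph is connected such that for every tuple of non-negative integers (a₁,…,a_r) with a₁e₁+⋯+a_re_r = 0, the conditions a_i = 0 and R(i,j) imply a_j = 0. Then the subgroup generated by e₁,…,e_r has rank exactly r−1. -/
/-- Abstract form of the lemma on the rank of the degenerate subgroup
`NG²(X₀,ℤ)`: in a free abelian group `G` of finite rank equipped with a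
bilinear pairing into `ℤ`, if `e₁ + ⋯ + e_r = 0`, and a connected symmetric
"intersection" relation (given by a connected simple graph on `Fin r`)
propagates vanishing of coefficients (any non-negative integer relation
`∑ aᵢ eᵢ = 0` with `aᵢ = 0` and `i` adjacent to `j` forces `aⱼ = 0`),
then the subgroup generated by the `eᵢ` has rank exactly `r - 1`. -/
theorem rank_of_degenerate_subgroup
    (G : Type*) [AddCommGroup G] [Module.Free ℤ G] [Module.Finite ℤ G]
    (B : G →ₗ[ℤ] G →ₗ[ℤ] ℤ)
    (r : ℕ) (hr : 1 ≤ r) (e : Fin r → G)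
    (hsum : ∑ i, e i = 0)
    (Γ : SimpleGraph (Fin r)) (hconn : Γ.Connected)
    (hprop : ∀ a : Fin r → ℕ, (∑ i, (a i : ℤ) • e i = 0) →
      ∀ i j : Fin r, a i = 0 → Γ.Adj i j → a j = 0) :
    Module.finrank ℤ (Submodule.span ℤ (Set.range e)) = r - 1 := by
  classical
  have hne : Nonempty (Fin r) := ⟨⟨0, hr⟩⟩
  set i0 : Fin r := ⟨0, hr⟩ with hi0
  -- propagation along the connected graph
  have hall : ∀ a : Fin r → ℕ, (∑ i, (a i : ℤ) • e i = 0) →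
      ∀ i, a i = 0 → ∀ j, a j = 0 := by
    intro a ha i hi j
    have key : ∀ {u v : Fin r}, Γ.Walk u v → a u = 0 → a v = 0 := by
      intro u v p
      induction p with
      | nil => exact id
      | cons hadj p ih => exact fun h0 => ih (hprop a ha _ _ h0 hadj)
    exact (hconn i j).elim fun p => key p hi
  -- linear independence of the family omitting i0
  have hind : LinearIndependent ℤ (fun i : {j : Fin r // j ≠ i0} => e i) := by
    rw [Fintype.linearIndependent_iff]
    intro g hg
    set c : Fin r → ℤ := fun j => if h : j = i0 then 0 else g ⟨j, h⟩ with hc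
    have hsub : ∑ j ∈ Finset.univ.erase i0, c j • e j
        = ∑ i : {j : Fin r // j ≠ i0}, c i • e i :=
      Finset.sum_subtype _ (by simp) _
    have hcsum : ∑ j, c j • e j = 0 := by
      rw [← Finset.sum_erase_add _ _ (Finset.mem_univ i0), hsub]
      have h1 : c i0 = 0 := dif_pos rfl
      have h2 : ∀ i : {j : Fin r // j ≠ i0}, c i • e i = g i • e i.1 := by
        intro i; rw [hc]; simp [dif_neg i.2]
      rw [h1]
      simp only [h2, zero_smul, add_zero]
      exact hg
    set m : ℤ := Finset.univ.inf' (Finset.univ_nonempty) c with hm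
    have hmle : ∀ j, m ≤ c j := fun j => Finset.inf'_le _ (Finset.mem_univ j)
    obtain ⟨j0, -, hj0⟩ := Finset.exists_mem_eq_inf' (Finset.univ_nonempty (α := Fin r)) c
    set a : Fin r → ℕ := fun j => (c j - m).toNat with ha
    have hacast : ∀ j, (a j : ℤ) = c j - m := fun j =>
      Int.toNat_of_nonneg (by linarith [hmle j])
    have hasum : ∑ j, (a j : ℤ) • e j = 0 := by
      simp only [hacast, sub_smul]
      rw [Finset.sum_sub_distrib, hcsum, ← Finset.smul_sum, hsum, smul_zero, sub_zero]
    have haj0 : a j0 = 0 := by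
      have : (a j0 : ℤ) = 0 := by rw [hacast, ← hj0, sub_self]
      exact_mod_cast this
    have hzero : ∀ j, a j = 0 := hall a hasum j0 haj0
    have hcm : ∀ j, c j = m := by
      intro j
      have h1 := hacast j
      rw [hzero j] at h1
      simp only [Nat.cast_zero] at h1
      omega
    have hm0 : m = 0 := by
      have := hcm i0
      rw [show c i0 = 0 from dif_pos rfl] at this
      exact this.symm
    intro i
    have h2 := hcm i.1
    rw [hm0] at h2
    simpa [hc, i.2] using h2
  -- span equality
  have hspan : Submodule.span ℤ (Set.range e)
      = Submodule.span ℤ (Set.range (fun i : {j : Fin r // j ≠ i0} => e i)) := by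
    apply le_antisymm
    · rw [Submodule.span_le]
      rintro _ ⟨j, rfl⟩
      by_cases h : j = i0
      · rw [h]
        have hsum' : ∑ k ∈ Finset.univ.erase i0, e k + e i0 = 0 := by
          rw [Finset.sum_erase_add _ _ (Finset.mem_univ i0)]; exact hsum
        have : e i0 = -∑ k ∈ Finset.univ.erase i0, e k := by
          linear_combination (norm := abel) hsum'
        rw [this]
        refine neg_mem (Submodule.sum_mem _ fun k hk => ?_)
        exact Submodule.subset_span ⟨⟨k, (Finset.mem_erase.1 hk).1⟩, rfl⟩
      · exact Submodule.subset_span ⟨⟨j, h⟩, rfl⟩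
    · rw [Submodule.span_le]
      rintro _ ⟨i, rfl⟩
      exact Submodule.subset_span ⟨i.1, rfl⟩
  rw [hspan, Module.finrank_eq_card_basis (Module.Basis.span hind)]
  simp [Fintype.card_subtype_compl, Fintype.card_subtype_eq]
end

section
/- In ℤ³ with the symmetric trilinear form μ determined by μ₁₁₁=2, μ₁₁₂=5, μ₁₁₃=2, μ₁₂₂=5, μ₁₂₃=10, μ₁₃₃=−4, μ₂₂₂=5, μ₂₂₃=10, μ₂₃₃=20, μ₃₃₃=−32, and the symmetric trilinear form ν determined by the same values except ν₃₃₃=−40, there is no ℤ-linear automorphism T of ℤ³ with μ(Tx,Ty,Tz) = ν(x,y,z) for all x,y,z; i.e. the two cubic forms are inequivalent over ℤ (indeed over ℂ, as their Aronhold T-invariants differ: T₁ = −86400 ≠ −38400 = T₂, while S₁ = S₂ = 0). -/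
/-!
An equivalence `T` over `ℤ` reduces modulo `7` to an invertible matrix over `𝔽₇` carrying the
cubic `x ↦ ν(x,x,x)` to `x ↦ μ(x,x,x)`, so both cubics have the same number of zeros in `𝔽₇³`.
A direct count gives `55` zeros for `μ` and `19` for `ν`; `7` is the smallest prime at which the
two counts differ.
-/

/-- Symmetric coefficient tensor of the first cubic intersection form `μ`:
μ₁₁₁=2, μ₁₁₂=5, μ₁₁₃=2, μ₁₂₂=5, μ₁₂₃=10, μ₁₃₃=−4, μ₂₂₂=5, μ₂₂₃=10,
μ₂₃₃=20, μ₃₃₃=−32. -/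
def muCoeff : Fin 3 → Fin 3 → Fin 3 → ℤ :=
  ![![![2, 5, 2], ![5, 5, 10], ![2, 10, -4]],
    ![![5, 5, 10], ![5, 5, 10], ![10, 10, 20]],
    ![![2, 10, -4], ![10, 10, 20], ![-4, 20, -32]]]

/-- Symmetric coefficient tensor of the second cubic intersection form `ν`:
the same values as `μ` except ν₃₃₃ = −40. -/
def nuCoeff : Fin 3 → Fin 3 → Fin 3 → ℤ :=
  ![![![2, 5, 2], ![5, 5, 10], ![2, 10, -4]],
    ![![5, 5, 10], ![5, 5, 10], ![10, 10, 20]],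
    ![![2, 10, -4], ![10, 10, 20], ![-4, 20, -40]]]

/-- The symmetric trilinear form on `ℤ³` associated with a coefficient
tensor. -/
def triForm (c : Fin 3 → Fin 3 → Fin 3 → ℤ)
    (x y z : Fin 3 → ℤ) : ℤ :=
  ∑ i, ∑ j, ∑ k, c i j k * x i * y j * z k

open Finset Matrix

section CubicForm

variable {ι R : Type*} [Fintype ι]

def cubicForm [CommSemiring R] (c : ι → ι → ι → R) (v : ι → R) : R :=
  ∑ i, ∑ j, ∑ k, c i j k * v i * v j * v k

theorem Int.cast_cubicForm [CommRing R] (c : ι → ι → ι → ℤ) (v : ι → ℤ) :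
    ((cubicForm c v : ℤ) : R) = cubicForm (fun i j k => (c i j k : R)) (Int.cast ∘ v) := by
  simp [cubicForm]

theorem card_zeros_cubicForm_eq_of_isUnit [CommRing R] [Fintype R] [DecidableEq ι] [DecidableEq R]
    {A : Matrix ι ι R} (hA : IsUnit A) {c d : ι → ι → ι → R}
    (h : ∀ v, cubicForm c (A *ᵥ v) = cubicForm d v) :
    #{v | cubicForm d v = 0} = #{v | cubicForm c v = 0} :=
  card_bijective (A *ᵥ ·) (Finite.injective_iff_bijective.1 (mulVec_injective_of_isUnit hA))
    (by simp [h])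

theorem exists_isUnit_intCast_comp_linearEquiv [DecidableEq ι] (n : ℕ)
    (T : (ι → ℤ) ≃ₗ[ℤ] (ι → ℤ)) :
    ∃ A : Matrix ι ι (ZMod n), IsUnit A ∧
      ∀ x : ι → ℤ, (Int.cast ∘ T x : ι → ZMod n) = A *ᵥ (Int.cast ∘ x) := by
  let φ := Int.castRingHom (ZMod n)
  have hM : IsUnit (LinearMap.toMatrix' (T : (ι → ℤ) →ₗ[ℤ] (ι → ℤ))) := by
    rw [isUnit_iff_isUnit_det, LinearMap.det_toMatrix']
    exact T.isUnit_det'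
  refine ⟨_, hM.map φ.mapMatrix, fun x => funext fun i => ?_⟩
  have := RingHom.map_mulVec φ (LinearMap.toMatrix' (T : (ι → ℤ) →ₗ[ℤ] (ι → ℤ))) x i
  rwa [LinearMap.toMatrix'_mulVec] at this

theorem card_zeros_intCast_cubicForm_eq_of_linearEquiv [DecidableEq ι] (n : ℕ) [NeZero n]
    {c d : ι → ι → ι → ℤ} (T : (ι → ℤ) ≃ₗ[ℤ] (ι → ℤ))
    (hT : ∀ x, cubicForm c (T x) = cubicForm d x) :
    #{v : ι → ZMod n | cubicForm (fun i j k => (d i j k : ZMod n)) v = 0} =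
      #{v : ι → ZMod n | cubicForm (fun i j k => (c i j k : ZMod n)) v = 0} := by
  obtain ⟨A, hA, hTA⟩ := exists_isUnit_intCast_comp_linearEquiv n T
  refine card_zeros_cubicForm_eq_of_isUnit hA fun v => ?_
  obtain ⟨x, rfl⟩ : ∃ x : ι → ℤ, (Int.cast ∘ x : ι → ZMod n) = v :=
    ⟨fun i => (v i).cast, funext fun i => ZMod.intCast_zmod_cast (v i)⟩
  rw [← hTA]
  simpa only [Int.cast_cubicForm] using congrArg (Int.cast : ℤ → ZMod n) (hT x)

end CubicForm

theorem card_zeros_muCoeff_zmod_seven :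
    #{v : Fin 3 → ZMod 7 | cubicForm (fun i j k => (muCoeff i j k : ZMod 7)) v = 0} = 55 := by
  decide

theorem card_zeros_nuCoeff_zmod_seven :
    #{v : Fin 3 → ZMod 7 | cubicForm (fun i j k => (nuCoeff i j k : ZMod 7)) v = 0} = 19 := by
  decide

/-- The two cubic intersection forms `μ` and `ν` (coming from the Picard
groups of the two Calabi–Yau 3-folds obtained by smoothing normal crossings
with blow-ups in different orders) are inequivalent over `ℤ`: there is no
`ℤ`-linear automorphism `T` of `ℤ³` with `μ(Tx,Ty,Tz) = ν(x,y,z)` for all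
`x, y, z`. -/
theorem cubic_forms_inequivalent :
    ¬ ∃ T : (Fin 3 → ℤ) ≃ₗ[ℤ] (Fin 3 → ℤ),
      ∀ x y z : Fin 3 → ℤ,
        triForm muCoeff (T x) (T y) (T z) = triForm nuCoeff x y z := by
  rintro ⟨T, hT⟩
  have h := card_zeros_intCast_cubicForm_eq_of_linearEquiv 7 T fun x => hT x x x
  rw [card_zeros_muCoeff_zmod_seven, card_zeros_nuCoeff_zmod_seven] at h
  exact absurd h (by decide)
end

section
/- Define the Aronhold S-invariant and T-invariant of a ternary cubic form in the standard way. For the cubic form F(x,y,z) with coefficients given by the symmetric trilinear values μ₁₁₁=2, μ₁₁₂=5, μ₁₁₃=2, μ₁₂₂=5, μ₁₂₃=10, μ₁₃₃=−4, μ₂₂₂=5, μ₂₂₃=10, μ₂₃₃=20, μ₃₃₃=−32 (so F = 2x³ + 15x²y + 6x²z + 15xy² + 60xyz − 12xz² + 5y³ + 30y²z + 60yz² − 32z³), one has S(F) = 0 and T(F) = −86400. -/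
/-- The Aronhold S-invariant (degree 4 in the coefficients) of the ternary
cubic
`a x³ + b y³ + c z³ + 3a₂ x²y + 3a₃ x²z + 3b₁ xy² + 3b₃ y²z + 3c₁ xz²
 + 3c₂ yz² + 6m xyz`,
in the classical normalization (for the Hesse cubic
`x³ + y³ + z³ + 6mxyz` it equals `m − m⁴`). -/
def aronholdS (a b c a2 a3 b1 b3 c1 c2 m : ℤ) : ℤ :=
  1*a*b*c*m - 1*a*b*c1*c2 - 1*a*c*b1*b3 + 1*a*b1*c2^2 + 1*a*b3^2*c1 - 1*a*b3*c2*m - 1*b*c*a2*a3 + 1*b*a2*c1^2 + 1*b*a3^2*c2 - 1*b*a3*c1*m + 1*c*a2^2*b3 - 1*c*a2*b1*m + 1*c*a3*b1^2 - 1*a2^2*c2^2 + 1*a2*a3*b3*c2 + 1*a2*b1*c1*c2 - 3*a2*b3*c1*m + 2*a2*c2*m^2 - 1*a3^2*b3^2 + 1*a3*b1*b3*c1 - 3*a3*b1*c2*m + 2*a3*b3*m^2 - 1*b1^2*c1^2 + 2*b1*c1*m^2 - 1*m^4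

set_option maxHeartbeats 2000000 in
/-- The Aronhold T-invariant (degree 6 in the coefficients) of the ternary
cubic
`a x³ + b y³ + c z³ + 3a₂ x²y + 3a₃ x²z + 3b₁ xy² + 3b₃ y²z + 3c₁ xz²
 + 3c₂ yz² + 6m xyz`
(normalized as in the paper, where for the cubic below it takes the value
`−86400`). -/
def aronholdT (a b c a2 a3 b1 b3 c1 c2 m : ℤ) : ℤ :=
  -6*a^2*b^2*c^2 + 36*a^2*b*c*b3*c2 - 24*a^2*b*c2^3 - 24*a^2*c*b3^3 + 18*a^2*b3^2*c2^2 + 36*a*b^2*c*a3*c1 - 24*a*b^2*c1^3 + 36*a*b*c^2*a2*b1 - 36*a*b*c*a2*b3*c1 - 72*a*b*c*a2*c2*m - 36*a*b*c*a3*b1*c2 - 72*a*b*c*a3*b3*m - 72*a*b*c*b1*c1*m + 120*a*b*c*m^3 + 72*a*b*a2*c1*c2^2 - 108*a*b*a3*b3*c1*c2 + 144*a*b*a3*c2^2*m + 72*a*b*b1*c1^2*c2 + 144*a*b*b3*c1^2*m - 216*a*b*c1*c2*m^2 - 24*a*c^2*b1^3 - 108*a*c*a2*b1*b3*c2 + 144*a*c*a2*b3^2*m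 + 72*a*c*a3*b1*b3^2 + 72*a*c*b1^2*b3*c1 + 144*a*c*b1^2*c2*m - 216*a*c*b1*b3*m^2 + 72*a*a2*b1*c2^3 - 36*a*a2*b3^2*c1*c2 - 72*a*a2*b3*c2^2*m - 36*a*a3*b1*b3*c2^2 + 72*a*a3*b3^3*c1 - 72*a*a3*b3^2*c2*m - 144*a*b1^2*c1*c2^2 - 144*a*b1*b3^2*c1^2 + 360*a*b1*b3*c1*c2*m - 72*a*b1*c2^2*m^2 - 72*a*b3^2*c1*m^2 + 72*a*b3*c2*m^3 - 24*b^2*c*a3^3 + 18*b^2*a3^2*c1^2 - 24*b*c^2*a2^3 + 72*b*c*a2^2*a3*c2 + 144*b*c*a2^2*c1*m + 72*b*c*a2*a3^2*b3 - 108*b*c*a2*a3*b1*c1 - 216*b*c*a2*a3*m^2 + 144*b*c*a3^2*b1*m - 144*b*a2^2*c1^2*c2 - 144*b*a2*a3^2*c2^2 - 36*b*a2*a3*b3*c1^2 + 360*b*a2*a3*c1*c2*m + 72*b*a2*b1*c1^3 - 72*b*a2*c1^2*m^2 + 72*b*a3^3*b3*c2 - 36*b*a3^2*b1*c1*c2 -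 72*b*a3^2*b3*c1*m - 72*b*a3^2*c2*m^2 - 72*b*a3*b1*c1^2*m + 72*b*a3*c1*m^3 + 18*c^2*a2^2*b1^2 + 72*c*a2^3*b3*c2 - 144*c*a2^2*a3*b3^2 - 36*c*a2^2*b1*b3*c1 - 72*c*a2^2*b1*c2*m - 72*c*a2^2*b3*m^2 - 36*c*a2*a3*b1^2*c2 + 360*c*a2*a3*b1*b3*m - 72*c*a2*b1^2*c1*m + 72*c*a2*b1*m^3 - 144*c*a3^2*b1^2*b3 + 72*c*a3*b1^3*c1 - 72*c*a3*b1^2*m^2 - 48*a2^3*c2^3 + 72*a2^2*a3*b3*c2^2 + 72*a2^2*b1*c1*c2^2 + 162*a2^2*b3^2*c1^2 - 216*a2^2*b3*c1*c2*m + 144*a2^2*c2^2*m^2 + 72*a2*a3^2*b3^2*c2 + 36*a2*a3*b1*b3*c1*c2 - 216*a2*a3*b1*c2^2*m - 216*a2*a3*b3^2*c1*m + 72*a2*a3*b3*c2*m^2 + 72*a2*b1^2*c1^2*c2 - 216*a2*b1*b3*c1^2*m + 72*a2*b1*c1*c2*m^2 + 216*a2*b3*c1*m^3 - 144*a2*c2*m^4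 - 48*a3^3*b3^3 + 162*a3^2*b1^2*c2^2 + 72*a3^2*b1*b3^2*c1 - 216*a3^2*b1*b3*c2*m + 144*a3^2*b3^2*m^2 + 72*a3*b1^2*b3*c1^2 - 216*a3*b1^2*c1*c2*m + 72*a3*b1*b3*c1*m^2 + 216*a3*b1*c2*m^3 - 144*a3*b3*m^4 - 48*b1^3*c1^3 + 144*b1^2*c1^2*m^2 - 144*b1*c1*m^4 + 48*m^6

theorem aronholdT_val : aronholdT 2 5 (-32) 5 2 5 10 (-4) 20 10 = -86400 := by
  decide +kernel

/-- For the cubic form `F` with symmetric trilinear values μ₁₁₁=2, μ₁₁₂=5,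
μ₁₁₃=2, μ₁₂₂=5, μ₁₂₃=10, μ₁₃₃=−4, μ₂₂₂=5, μ₂₂₃=10, μ₂₃₃=20, μ₃₃₃=−32
(so `F = 2x³ + 15x²y + 6x²z + 15xy² + 60xyz − 12xz² + 5y³ + 30y²z + 60yz²
− 32z³`), the Aronhold invariants are `S(F) = 0` and `T(F) = −86400`. -/
theorem aronhold_invariants_of_cubic
    (a b c a2 a3 b1 b3 c1 c2 m : ℤ)
    (hF : ∀ x y z : ℤ,
      2*x^3 + 15*x^2*y + 6*x^2*z + 15*x*y^2 + 60*x*y*z - 12*x*z^2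
        + 5*y^3 + 30*y^2*z + 60*y*z^2 - 32*z^3 =
      a*x^3 + b*y^3 + c*z^3
        + 3*(a2*x^2*y + a3*x^2*z + b1*x*y^2 + b3*y^2*z + c1*x*z^2 + c2*y*z^2)
        + 6*m*x*y*z) :
    aronholdS a b c a2 a3 b1 b3 c1 c2 m = 0 ∧
      aronholdT a b c a2 a3 b1 b3 c1 c2 m = -86400 := by
  have h1 := hF 1 0 0
  have h2 := hF 0 1 0
  have h3 := hF 0 0 1
  have h4 := hF 1 1 0
  have h5 := hF 1 (-1) 0
  have h6 := hF 1 0 1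
  have h7 := hF 1 0 (-1)
  have h8 := hF 0 1 1
  have h9 := hF 0 1 (-1)
  have h10 := hF 1 1 1
  ring_nf at h1 h2 h3 h4 h5 h6 h7 h8 h9 h10
  have ha : a = 2 := by omega
  have hb : b = 5 := by omega
  have hc : c = -32 := by omega
  have ha2 : a2 = 5 := by omega
  have ha3 : a3 = 2 := by omega
  have hb1 : b1 = 5 := by omega
  have hb3 : b3 = 10 := by omega
  have hc1 : c1 = -4 := by omega
  have hc2 : c2 = 20 := by omega
  have hm : m = 10 := by omega
  subst ha hb hc ha2 ha3 hb1 hb3 hc1 hc2 hm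
  exact ⟨by norm_num [aronholdS], aronholdT_val⟩
end
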